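/- arXiv:2511.14785 — 3 statements merged into one kernel-verified Lean document; each statement's English description precedes it below -/
import Mathlib

section
/- The rhombicuboctahedron is vertex-transitive under its rotation group: for any two points u, v ∈ V there exists a matrix A in SO(3) with A(V) = V and A·u = v. -/
noncomputable def base : Fin 3 → ℝ := ![1, 1, 1 + Real.sqrt 2]

/-- The vertex set of the rhombicuboctahedron with edge length 2 centered at the origin:
all points whose coordinates are, in some order, `±1, ±1, ±(1 + √2)`
(all coordinate permutations combined with all choices of signs). -/
def V : Set (EuclideanSpace ℝ (Fin 3)) :=
  {v | ∃ σ : Equiv.Perm (Fin 3), ∃ ε : Fin 3 → ℝ,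
    (∀ i, ε i = 1 ∨ ε i = -1) ∧ ∀ i, v i = ε i * base (σ i)}

/-- The action of a 3×3 real matrix on ℝ³ (as `EuclideanSpace ℝ (Fin 3)`). -/
def act (A : Matrix (Fin 3) (Fin 3) ℝ) (v : EuclideanSpace ℝ (Fin 3)) :
    EuclideanSpace ℝ (Fin 3) := WithLp.toLp 2 (A.mulVec v)

/-!
`V` is the orbit of `b = (1, 1, 1 + √2)` under the signed permutation matrices, which are
orthogonal and map `V` onto itself. Writing `u = M b` and `v = N b`, both `N Mᵀ` and `N R Mᵀ` send
`u` to `v`, where `R` is the reflection swapping the first two coordinates, which fixes `b`.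
Their determinants differ by a sign, so one of them is a rotation.
-/

open Matrix Equiv

section SignedPerm

variable {ι : Type*} [Fintype ι] [DecidableEq ι]

def signedPermMatrix (s : ι → ℝ) (π : Perm ι) : Matrix ι ι ℝ :=
  diagonal s * π.permMatrix ℝ

variable {s : ι → ℝ} {π : Perm ι}

lemma signedPermMatrix_mulVec (w : ι → ℝ) :
    signedPermMatrix s π *ᵥ w = fun i => s i * w (π i) := by
  ext i
  simp [signedPermMatrix, ← mulVec_mulVec, permMatrix_mulVec, mulVec_diagonal]

lemma transpose_signedPermMatrix_mulVec (w : ι → ℝ) :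
    (signedPermMatrix s π)ᵀ *ᵥ w = fun i => s (π.symm i) * w (π.symm i) := by
  ext i
  simp [signedPermMatrix, ← mulVec_mulVec, permMatrix_mulVec, mulVec_diagonal, Perm.inv_def]

lemma signedPermMatrix_mem_orthogonalGroup (hs : ∀ i, s i = 1 ∨ s i = -1) :
    signedPermMatrix s π ∈ orthogonalGroup ι ℝ := by
  rw [mem_orthogonalGroup_iff']
  refine mulVec_injective (funext fun w => funext fun i => ?_)
  rcases hs (π.symm i) with h | h <;>
    simp [← mulVec_mulVec, signedPermMatrix_mulVec, transpose_signedPermMatrix_mulVec, h]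

lemma det_signedPermMatrix : (signedPermMatrix s π).det = (∏ i, s i) * Perm.sign π := by
  simp [signedPermMatrix]

end SignedPerm

lemma det_eq_one_or_neg_one_of_mem_orthogonalGroup {ι : Type*} [Fintype ι] [DecidableEq ι]
    {A : Matrix ι ι ℝ} (hA : A ∈ orthogonalGroup ι ℝ) : A.det = 1 ∨ A.det = -1 := by
  simpa [mul_self_eq_one_iff] using (det_of_mem_unitary hA).1

section Symmetry

variable {S : Set (EuclideanSpace ℝ (Fin 3))} {A B : Matrix (Fin 3) (Fin 3) ℝ}

lemma act_one (w : EuclideanSpace ℝ (Fin 3)) : act 1 w = w := by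
  simp [act]

lemma act_mul (w : EuclideanSpace ℝ (Fin 3)) : act (A * B) w = act A (act B w) := by
  simp [act, mulVec_mulVec]

lemma act_transpose_act (hA : A ∈ orthogonalGroup (Fin 3) ℝ) (w : EuclideanSpace ℝ (Fin 3)) :
    act Aᵀ (act A w) = w := by
  rw [← act_mul, (mem_orthogonalGroup_iff' _ _).mp hA, act_one]

def IsSymmetryOf (S : Set (EuclideanSpace ℝ (Fin 3))) (A : Matrix (Fin 3) (Fin 3) ℝ) : Prop :=
  A ∈ orthogonalGroup (Fin 3) ℝ ∧ act A '' S = S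

lemma IsSymmetryOf.mul (hA : IsSymmetryOf S A) (hB : IsSymmetryOf S B) :
    IsSymmetryOf S (A * B) := by
  refine ⟨mul_mem hA.1 hB.1, ?_⟩
  rw [show act (A * B) = act A ∘ act B from funext act_mul, Set.image_comp, hB.2, hA.2]

lemma IsSymmetryOf.transpose (hA : IsSymmetryOf S A) : IsSymmetryOf S Aᵀ := by
  refine ⟨transpose_mem_unitaryGroup_iff.mpr hA.1, ?_⟩
  calc act Aᵀ '' S = act Aᵀ '' (act A '' S) := by rw [hA.2]
    _ = S := by simp [Set.image_image, act_transpose_act hA.1]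

lemma exists_isSymmetryOf_det_eq_one_act_eq {b : EuclideanSpace ℝ (Fin 3)}
    {R M N : Matrix (Fin 3) (Fin 3) ℝ} (hR : IsSymmetryOf S R) (hRdet : R.det = -1)
    (hRb : act R b = b) (hM : IsSymmetryOf S M) (hN : IsSymmetryOf S N) :
    ∃ A, IsSymmetryOf S A ∧ A.det = 1 ∧ act A (act M b) = act N b := by
  have hsends : ∀ F, act F b = b → act (N * F * Mᵀ) (act M b) = act N b := fun F hF => by
    rw [act_mul, act_transpose_act hM.1, act_mul, hF]
  have hdet : ∀ F, (N * F * Mᵀ).det = F.det * (N * Mᵀ).det := fun F => by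
    simp only [det_mul, det_transpose]; ring
  rcases det_eq_one_or_neg_one_of_mem_orthogonalGroup (hN.mul hM.transpose).1 with h | h
  · exact ⟨N * Mᵀ, hN.mul hM.transpose, h, by simpa using hsends 1 (act_one b)⟩
  · exact ⟨N * R * Mᵀ, (hN.mul hR).mul hM.transpose, by rw [hdet, h, hRdet]; norm_num,
      hsends R hRb⟩

end Symmetry

lemma signedPerm_mem_V {s : Fin 3 → ℝ} (hs : ∀ i, s i = 1 ∨ s i = -1) (π : Perm (Fin 3))
    {w : EuclideanSpace ℝ (Fin 3)} (hw : w ∈ V) : WithLp.toLp 2 (fun i => s i * w (π i)) ∈ V := by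
  obtain ⟨σ, ε, hε, hw⟩ := hw
  refine ⟨π.trans σ, fun i => s i * ε (π i), fun i => ?_, fun i => ?_⟩
  · rcases hs i with h | h <;> rcases hε (π i) with h' | h' <;> simp [h, h']
  · simp [hw, mul_assoc]

lemma isSymmetryOf_V_signedPermMatrix {s : Fin 3 → ℝ} (hs : ∀ i, s i = 1 ∨ s i = -1)
    (π : Perm (Fin 3)) : IsSymmetryOf V (signedPermMatrix s π) := by
  have hA := signedPermMatrix_mem_orthogonalGroup (π := π) hs
  refine ⟨hA, (Set.image_subset_iff.mpr fun w hw => ?_).antisymm fun w hw => ?_⟩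
  · simpa [act, signedPermMatrix_mulVec] using signedPerm_mem_V hs π hw
  · refine ⟨act (signedPermMatrix s π)ᵀ w, ?_, ?_⟩
    · simpa [act, transpose_signedPermMatrix_mulVec] using
        signedPerm_mem_V (fun i => hs (π.symm i)) π.symm hw
    · simpa using act_transpose_act (transpose_mem_unitaryGroup_iff.mpr hA) w

lemma exists_isSymmetryOf_V_act_base_eq {v : EuclideanSpace ℝ (Fin 3)} (hv : v ∈ V) :
    ∃ M, IsSymmetryOf V M ∧ act M (WithLp.toLp 2 base) = v := by
  obtain ⟨σ, ε, hε, hv⟩ := hv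
  refine ⟨signedPermMatrix ε σ, isSymmetryOf_V_signedPermMatrix hε σ, ?_⟩
  ext i
  simp [act, signedPermMatrix_mulVec, hv]

/-- The rhombicuboctahedron is vertex-transitive under its rotation group: for any two
vertices `u, v ∈ V` there is a matrix `A ∈ SO(3)` with `A(V) = V` and `A·u = v`. -/
theorem rhombicuboctahedron_vertex_transitive :
    ∀ u ∈ V, ∀ v ∈ V, ∃ A : Matrix (Fin 3) (Fin 3) ℝ,
      A ∈ Matrix.orthogonalGroup (Fin 3) ℝ ∧ A.det = 1 ∧ act A '' V = V ∧ act A u = v := by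
  intro u hu v hv
  obtain ⟨M, hM, rfl⟩ := exists_isSymmetryOf_V_act_base_eq hu
  obtain ⟨N, hN, rfl⟩ := exists_isSymmetryOf_V_act_base_eq hv
  have hRb : act (signedPermMatrix 1 (swap 0 1)) (WithLp.toLp 2 base) = WithLp.toLp 2 base := by
    ext i
    fin_cases i <;> simp [act, signedPermMatrix_mulVec, base, swap_apply_def]
  obtain ⟨A, hA, hdet, hAu⟩ := exists_isSymmetryOf_det_eq_one_act_eq
    (isSymmetryOf_V_signedPermMatrix (fun _ => Or.inl rfl) (swap 0 1))
    (by simp [det_signedPermMatrix]) hRb hM hN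
  exact ⟨A, hA.1, hdet, hA.2, hAu⟩
end

section
/- The pseudo-rhombicuboctahedron is not congruent to the rhombicuboctahedron: there is no isometry of ℝ³ (equivalently, no A ∈ O(3) and translation vector t ∈ ℝ³ such that x ↦ A·x + t) mapping the set V onto the set V'. -/
noncomputable def pt (a b c : ℝ) : EuclideanSpace ℝ (Fin 3) := WithLp.toLp 2 ![a, b, c]

/-- The four top-cupola vertices `(±1, ±1, 1 + √2)` of the rhombicuboctahedron
that get replaced. -/
noncomputable def Vtop : Set (EuclideanSpace ℝ (Fin 3)) :=
  {pt 1 1 (1 + Real.sqrt 2), pt 1 (-1) (1 + Real.sqrt 2),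
   pt (-1) 1 (1 + Real.sqrt 2), pt (-1) (-1) (1 + Real.sqrt 2)}

/-- The four new top vertices `(±√2, 0, 1 + √2)` and `(0, ±√2, 1 + √2)`
(the top square cupola rotated by 45° about the z-axis). -/
noncomputable def Vnew : Set (EuclideanSpace ℝ (Fin 3)) :=
  {pt (Real.sqrt 2) 0 (1 + Real.sqrt 2), pt (-Real.sqrt 2) 0 (1 + Real.sqrt 2),
   pt 0 (Real.sqrt 2) (1 + Real.sqrt 2), pt 0 (-Real.sqrt 2) (1 + Real.sqrt 2)}

/-- The vertex set of the pseudo-rhombicuboctahedron (elongated square gyrobicupola)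
with edge length 2. -/
noncomputable def V' : Set (EuclideanSpace ℝ (Fin 3)) := (V \ Vtop) ∪ Vnew

/-!
Every point of `V` has squared norm `5 + 2√2`, so an isometry `x ↦ A x + t` carrying `V` onto
`V'` puts all of `V'` on the sphere of that radius about `t`. Since `V'` contains the antipodal
pairs `±(1 + √2, ±1, ±1)`, and a point equidistant from `u` and `-u` is orthogonal to `u`, this
forces `t = 0`. Then `V' = A V` would be centrally symmetric like `V`, but `(√2, 0, 1 + √2)` lies
in `V'` while its antipode does not.
-/

open Real

lemma norm_act {A : Matrix (Fin 3) (Fin 3) ℝ} (hA : A ∈ Matrix.orthogonalGroup (Fin 3) ℝ)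
    (v : EuclideanSpace ℝ (Fin 3)) : ‖act A v‖ = ‖v‖ := by
  have h : A.mulVec v ⬝ᵥ A.mulVec v = v ⬝ᵥ v := by
    rw [Matrix.dotProduct_mulVec, Matrix.vecMul_mulVec,
      (Matrix.mem_orthogonalGroup_iff' _ _).mp hA, Matrix.vecMul_one]
  rw [← sq_eq_sq₀ (norm_nonneg _) (norm_nonneg _), ← real_inner_self_eq_norm_sq,
    ← real_inner_self_eq_norm_sq, EuclideanSpace.inner_eq_star_dotProduct,
    EuclideanSpace.inner_eq_star_dotProduct]
  simpa [act] using h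

lemma act_neg (A : Matrix (Fin 3) (Fin 3) ℝ) (v : EuclideanSpace ℝ (Fin 3)) :
    act A (-v) = -act A v := by
  simp [act, Matrix.mulVec_neg]

lemma inner_eq_zero_of_norm_sub_sq_eq_norm_neg_sub_sq {F : Type*} [NormedAddCommGroup F]
    [InnerProductSpace ℝ F] {u t : F} (h : ‖u - t‖ ^ 2 = ‖-u - t‖ ^ 2) : inner ℝ u t = 0 := by
  rw [norm_sub_sq_real, norm_sub_sq_real, norm_neg, inner_neg_left] at h
  linarith

lemma norm_sq_of_mem_V {v : EuclideanSpace ℝ (Fin 3)} (hv : v ∈ V) :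
    ‖v‖ ^ 2 = 5 + 2 * √2 := by
  obtain ⟨σ, ε, hε, h⟩ := hv
  have hsq : ∀ i, v i ^ 2 = base (σ i) ^ 2 := fun i => by
    rcases hε i with h1 | h1 <;> simp [h i, h1]
  rw [EuclideanSpace.norm_sq_eq]
  simp only [Real.norm_eq_abs, sq_abs, hsq]
  rw [Equiv.sum_comp σ (fun i => base i ^ 2)]
  simp [Fin.sum_univ_three, base]
  nlinarith [Real.sq_sqrt (show (0:ℝ) ≤ 2 by norm_num)]

lemma neg_mem_V {v : EuclideanSpace ℝ (Fin 3)} (hv : v ∈ V) : -v ∈ V := by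
  obtain ⟨σ, ε, hε, h⟩ := hv
  refine ⟨σ, -ε, fun i => ?_, fun i => ?_⟩
  · rcases hε i with h1 | h1 <;> simp [h1]
  · simp [h i]

lemma apply_ne_zero_of_mem_V {v : EuclideanSpace ℝ (Fin 3)} (hv : v ∈ V) (i : Fin 3) :
    v i ≠ 0 := by
  obtain ⟨σ, ε, hε, h⟩ := hv
  have hbase : ∀ j, 0 < base j := fun j => by
    fin_cases j <;> simp [base]
    positivity
  rw [h i]
  exact mul_ne_zero (by rcases hε i with h1 | h1 <;> simp [h1]) (hbase (σ i)).ne'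

lemma pt_mem_V {a b : ℝ} (ha : a = 1 ∨ a = -1) (hb : b = 1 ∨ b = -1) :
    pt (1 + √2) a b ∈ V := by
  refine ⟨Equiv.swap 0 2, ![1, a, b], fun i => ?_, fun i => ?_⟩
  · fin_cases i <;> simp [ha, hb]
  · fin_cases i <;> simp [pt, base, Equiv.swap_apply_def]

lemma mem_V'_of_mem_V {v : EuclideanSpace ℝ (Fin 3)} (hv : v ∈ V) (h : v 2 ≠ 1 + √2) :
    v ∈ V' := by
  refine Or.inl ⟨hv, fun hv' => h ?_⟩
  simp only [Vtop, Set.mem_insert_iff, Set.mem_singleton_iff] at hv'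
  rcases hv' with rfl | rfl | rfl | rfl <;> simp [pt]

lemma pt_mem_V'_and_neg_mem_V' {a b : ℝ} (ha : a = 1 ∨ a = -1) (hb : b = 1 ∨ b = -1) :
    pt (1 + √2) a b ∈ V' ∧ -pt (1 + √2) a b ∈ V' := by
  have hs : 0 < √2 := by positivity
  refine ⟨mem_V'_of_mem_V (pt_mem_V ha hb) ?_, mem_V'_of_mem_V (neg_mem_V (pt_mem_V ha hb)) ?_⟩
  all_goals
    simp only [pt, PiLp.neg_apply, PiLp.toLp_apply, Matrix.cons_val_two, Matrix.tail_cons,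
      Matrix.head_cons]
    rcases hb with rfl | rfl <;> intro h <;> linarith

lemma eq_zero_of_forall_mem_V'_norm_sub_sq {t : EuclideanSpace ℝ (Fin 3)} {c : ℝ}
    (h : ∀ q ∈ V', ‖q - t‖ ^ 2 = c) : t = 0 := by
  have horth : ∀ a b : ℝ, (a = 1 ∨ a = -1) → (b = 1 ∨ b = -1) →
      (1 + √2) * t 0 + a * t 1 + b * t 2 = 0 := fun a b ha hb => by
    obtain ⟨hq, hnq⟩ := pt_mem_V'_and_neg_mem_V' ha hb
    have := inner_eq_zero_of_norm_sub_sq_eq_norm_neg_sub_sq ((h _ hq).trans (h _ hnq).symm)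
    simpa [pt, PiLp.inner_apply, Fin.sum_univ_three, mul_comm] using this
  have h1 := horth 1 1 (.inl rfl) (.inl rfl)
  have h2 := horth 1 (-1) (.inl rfl) (.inr rfl)
  have h3 := horth (-1) 1 (.inr rfl) (.inl rfl)
  have ht2 : t 2 = 0 := by linear_combination (h1 - h2) / 2
  have ht1 : t 1 = 0 := by linear_combination (h1 - h3) / 2
  have ht0 : t 0 = 0 := by
    have : (1 + √2) * t 0 = 0 := by linear_combination h1 - ht1 - ht2
    exact (mul_eq_zero.mp this).resolve_left (by positivity)
  ext i
  fin_cases i <;> assumption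

lemma norm_sub_sq_of_mem_image_V {A : Matrix (Fin 3) (Fin 3) ℝ}
    (hA : A ∈ Matrix.orthogonalGroup (Fin 3) ℝ) {t q : EuclideanSpace ℝ (Fin 3)}
    (hq : q ∈ (fun x => act A x + t) '' V) : ‖q - t‖ ^ 2 = 5 + 2 * √2 := by
  obtain ⟨v, hv, rfl⟩ := hq
  simpa [norm_act hA] using norm_sq_of_mem_V hv

lemma neg_mem_image_act {A : Matrix (Fin 3) (Fin 3) ℝ} {S : Set (EuclideanSpace ℝ (Fin 3))}
    (hS : ∀ v ∈ S, -v ∈ S) {q : EuclideanSpace ℝ (Fin 3)} (hq : q ∈ act A '' S) :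
    -q ∈ act A '' S := by
  obtain ⟨v, hv, rfl⟩ := hq
  exact ⟨-v, hS v hv, act_neg A v⟩

lemma exists_mem_V'_neg_notMem_V' : ∃ q ∈ V', -q ∉ V' := by
  refine ⟨pt √2 0 (1 + √2), Or.inr (by simp [Vnew]), ?_⟩
  rintro (⟨hV, -⟩ | hnew)
  · exact apply_ne_zero_of_mem_V hV 1 (by simp [pt])
  · simp only [Vnew, Set.mem_insert_iff, Set.mem_singleton_iff] at hnew
    have hs : 0 < √2 := by positivity
    rcases hnew with h | h | h | h <;>
    · have := congrArg (fun w => w 2) h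
      simp [pt] at this
      linarith

/-- The pseudo-rhombicuboctahedron is not congruent to the rhombicuboctahedron:
no isometry of ℝ³, i.e. no map `x ↦ A·x + t` with `A ∈ O(3)` and `t ∈ ℝ³`,
maps `V` onto `V'`. -/
theorem pseudoRhombicuboctahedron_not_congruent :
    ¬ ∃ A : Matrix (Fin 3) (Fin 3) ℝ, A ∈ Matrix.orthogonalGroup (Fin 3) ℝ ∧
      ∃ t : EuclideanSpace ℝ (Fin 3), (fun x => act A x + t) '' V = V' := by
  rintro ⟨A, hA, t, himg⟩
  obtain rfl : t = 0 := eq_zero_of_forall_mem_V'_norm_sub_sq fun q hq =>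
    norm_sub_sq_of_mem_image_V hA (himg ▸ hq)
  simp only [add_zero] at himg
  obtain ⟨q, hq, hnq⟩ := exists_mem_V'_neg_notMem_V'
  rw [← himg] at hq hnq
  exact hnq (neg_mem_image_act (fun _ => neg_mem_V) hq)
end

section
/- In the pseudo-rhombicuboctahedron every vertex has exactly 4 neighbors: the minimum Euclidean distance between distinct points of V' is 2, and for every v ∈ V' the set of points u ∈ V' with dist(u, v) = 2 has exactly 4 elements. -/
/-!
All coordinates of `V'` lie in `ℤ[√2]`, so squared distances between vertices are elements of
`ℤ[√2]`. The embedding `ℤ[√2] → ℝ` is injective (`√2` is irrational) and monotone for the order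
of `Zsqrtd`, so each claim about real distances becomes a comparison in `ℤ[√2]` between the
24 explicit vertices, which the kernel decides.
-/

open Finset Zsqrtd

namespace Zsqrtd

variable {d : ℕ}

theorem toReal_nonneg_of_nonneg {x : ℤ√d} (hx : x.Nonneg) :
    0 ≤ toReal (Int.natCast_nonneg d) x := by
  have hsq : √(d : ℝ) ^ 2 = d := Real.sq_sqrt (Nat.cast_nonneg d)
  have hs : 0 ≤ √(d : ℝ) := Real.sqrt_nonneg _
  obtain ⟨a, b, rfl | rfl | rfl⟩ := nonneg_cases hx
  · simp only [toReal_apply, Int.cast_natCast]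
    positivity
  · have hab : (d : ℝ) * b * b ≤ a * a := by
      have := nonnegg_pos_neg.1 hx
      rw [SqLe, one_mul] at this
      exact_mod_cast this
    have : (b * √(d : ℝ)) ^ 2 ≤ (a : ℝ) ^ 2 := by rw [mul_pow, hsq]; linarith
    have := (pow_le_pow_iff_left₀ (by positivity) (by positivity) two_ne_zero).1 this
    simp only [toReal_apply, Int.cast_neg, Int.cast_natCast]
    linarith
  · have hab : (a : ℝ) * a ≤ d * b * b := by
      have := nonnegg_neg_pos.1 hx
      rw [SqLe, one_mul] at this
      exact_mod_cast this
    have : (a : ℝ) ^ 2 ≤ (b * √(d : ℝ)) ^ 2 := by rw [mul_pow, hsq]; linarith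
    have := (pow_le_pow_iff_left₀ (by positivity) (by positivity) two_ne_zero).1 this
    simp only [toReal_apply, Int.cast_neg, Int.cast_natCast]
    linarith

theorem toReal_mono : Monotone (toReal (Int.natCast_nonneg d)) :=
  fun x y (hxy : (y - x).Nonneg) =>
    sub_nonneg.1 (map_sub (toReal _) y x ▸ toReal_nonneg_of_nonneg hxy)

theorem toReal_sqrtd : toReal (Int.natCast_nonneg d) sqrtd = √d := by
  simp

theorem toReal_injective_of_nonsquare [Nonsquare d] :
    Function.Injective (toReal (Int.natCast_nonneg d)) := by
  refine toReal_injective _ fun n h => Nonsquare.ns d n.natAbs ?_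
  exact_mod_cast h.trans (Int.natAbs_mul_self' n).symm

section Euclidean

variable {ι : Type*}

noncomputable def toEuclidean (p : ι → ℤ√d) : EuclideanSpace ℝ ι :=
  WithLp.toLp 2 fun i => toReal (Int.natCast_nonneg d) (p i)

@[simp]
theorem toEuclidean_apply (p : ι → ℤ√d) (i : ι) :
    toEuclidean p i = toReal (Int.natCast_nonneg d) (p i) :=
  rfl

theorem toEuclidean_injective [Nonsquare d] :
    Function.Injective (toEuclidean : (ι → ℤ√d) → EuclideanSpace ℝ ι) := fun _ _ h =>
  funext fun i => toReal_injective_of_nonsquare (congrFun (congrArg WithLp.ofLp h) i)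

variable [Fintype ι]

def sqDist (p q : ι → ℤ√d) : ℤ√d :=
  ∑ i, (p i - q i) ^ 2

theorem dist_toEuclidean_sq (p q : ι → ℤ√d) :
    dist (toEuclidean p) (toEuclidean q) ^ 2 = toReal (Int.natCast_nonneg d) (sqDist p q) := by
  rw [EuclideanSpace.dist_eq, Real.sq_sqrt (by positivity)]
  simp only [toEuclidean, sqDist, map_sum, map_pow, map_sub, Real.dist_eq, sq_abs]

theorem natCast_le_dist_toEuclidean {p q : ι → ℤ√d} {n : ℕ}
    (h : (n : ℤ√d) ^ 2 ≤ sqDist p q) :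
    (n : ℝ) ≤ dist (toEuclidean p) (toEuclidean q) := by
  have h' := toReal_mono h
  rw [map_pow, map_natCast, ← dist_toEuclidean_sq] at h'
  exact (pow_le_pow_iff_left₀ (Nat.cast_nonneg n) dist_nonneg two_ne_zero).1 h'

theorem dist_toEuclidean_eq_natCast_iff [Nonsquare d] {p q : ι → ℤ√d} {n : ℕ} :
    dist (toEuclidean p) (toEuclidean q) = n ↔ sqDist p q = n ^ 2 := by
  rw [← sq_eq_sq₀ dist_nonneg (Nat.cast_nonneg n), dist_toEuclidean_sq,
    ← toReal_injective_of_nonsquare.eq_iff, map_pow, map_natCast]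

theorem ncard_sphere_inter_image_toEuclidean [Nonsquare d] (S : Finset (ι → ℤ√d))
    (q : ι → ℤ√d) (n : ℕ) :
    {u | u ∈ toEuclidean '' (S : Set (ι → ℤ√d)) ∧ dist u (toEuclidean q) = n}.ncard =
      #(S.filter fun p => sqDist p q = n ^ 2) := by
  have h : {u | u ∈ toEuclidean '' (S : Set (ι → ℤ√d)) ∧ dist u (toEuclidean q) = n} =
      toEuclidean '' (↑(S.filter fun p => sqDist p q = n ^ 2) : Set (ι → ℤ√d)) := by
    ext u
    simp only [Set.mem_ofPred_eq, Set.mem_image, Finset.coe_filter, Finset.mem_coe]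
    constructor
    · rintro ⟨⟨p, hp, rfl⟩, hpq⟩
      exact ⟨p, ⟨hp, dist_toEuclidean_eq_natCast_iff.1 hpq⟩, rfl⟩
    · rintro ⟨p, ⟨hp, hpq⟩, rfl⟩
      exact ⟨⟨p, hp, rfl⟩, dist_toEuclidean_eq_natCast_iff.2 hpq⟩
  rw [h, Set.ncard_image_of_injective _ toEuclidean_injective, Set.ncard_coe_finset]

end Euclidean

end Zsqrtd

instance : Nonsquare 2 :=
  ⟨fun n h => by
    have : n ≤ 2 := by nlinarith
    interval_cases n <;> omega⟩

theorem eq_one_or_eq_neg_one_iff_exists_intUnits {R : Type*} [Ring R] {x : R} :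
    x = 1 ∨ x = -1 ↔ ∃ u : ℤˣ, ((u : ℤ) : R) = x := by
  constructor
  · rintro (rfl | rfl)
    exacts [⟨1, by simp⟩, ⟨-1, by simp⟩]
  · rintro ⟨u, rfl⟩
    rcases Int.units_eq_one_or u with rfl | rfl <;> simp

theorem toEuclidean_eq_pt {d : ℕ} (a b c : ℤ√d) :
    toEuclidean (![a, b, c] : Fin 3 → ℤ√d) =
      pt (toReal (Int.natCast_nonneg d) a) (toReal (Int.natCast_nonneg d) b)
        (toReal (Int.natCast_nonneg d) c) := by
  ext i
  fin_cases i <;> rfl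

-- `ℤ√(2 : ℕ)` rather than `ℤ√2`: the order on `Zsqrtd` only exists for a natural-number index.
def baseZ : Fin 3 → ℤ√(2 : ℕ) := ![1, 1, 1 + sqrtd]

theorem toReal_baseZ (j : Fin 3) : toReal (Int.natCast_nonneg 2) (baseZ j) = base j := by
  fin_cases j <;> simp [baseZ, base]

def VZ : Finset (Fin 3 → ℤ√(2 : ℕ)) :=
  (univ : Finset (Equiv.Perm (Fin 3) × (Fin 3 → ℤˣ))).image
    fun σε i => ((σε.2 i : ℤ) : ℤ√(2 : ℕ)) * baseZ (σε.1 i)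

def VtopZ : Finset (Fin 3 → ℤ√(2 : ℕ)) :=
  {![1, 1, 1 + sqrtd], ![1, -1, 1 + sqrtd], ![-1, 1, 1 + sqrtd], ![-1, -1, 1 + sqrtd]}

def VnewZ : Finset (Fin 3 → ℤ√(2 : ℕ)) :=
  {![sqrtd, 0, 1 + sqrtd], ![-sqrtd, 0, 1 + sqrtd], ![0, sqrtd, 1 + sqrtd],
    ![0, -sqrtd, 1 + sqrtd]}

def V'Z : Finset (Fin 3 → ℤ√(2 : ℕ)) :=
  VZ \ VtopZ ∪ VnewZ

theorem V_eq_image : V = toEuclidean '' (VZ : Set (Fin 3 → ℤ√(2 : ℕ))) := by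
  ext v
  rw [VZ, Finset.coe_image, Finset.coe_univ, Set.image_univ, ← Set.range_comp, Set.mem_range,
    Prod.exists]
  refine exists_congr fun σ => ⟨?_, ?_⟩
  · rintro ⟨ε, hε, hv⟩
    choose e he using fun i => eq_one_or_eq_neg_one_iff_exists_intUnits.1 (hε i)
    refine ⟨e, ?_⟩
    ext i
    simp only [Function.comp_apply, toEuclidean_apply, map_mul, map_intCast, toReal_baseZ, hv, he]
  · rintro ⟨e, rfl⟩
    refine ⟨fun i => ((e i : ℤ) : ℝ),
      fun i => eq_one_or_eq_neg_one_iff_exists_intUnits.2 ⟨e i, rfl⟩, fun i => ?_⟩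
    simp only [Function.comp_apply, toEuclidean_apply, map_mul, map_intCast, toReal_baseZ]

theorem Vtop_eq_image : Vtop = toEuclidean '' (VtopZ : Set (Fin 3 → ℤ√(2 : ℕ))) := by
  simp only [Vtop, VtopZ, Finset.coe_insert, Finset.coe_singleton, Set.image_insert_eq,
    Set.image_singleton, toEuclidean_eq_pt, map_one, map_neg, map_add, toReal_sqrtd]
  norm_num

theorem Vnew_eq_image : Vnew = toEuclidean '' (VnewZ : Set (Fin 3 → ℤ√(2 : ℕ))) := by
  simp only [Vnew, VnewZ, Finset.coe_insert, Finset.coe_singleton, Set.image_insert_eq,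
    Set.image_singleton, toEuclidean_eq_pt, map_one, map_neg, map_add, map_zero, toReal_sqrtd]
  norm_num

theorem V'_eq_image : V' = toEuclidean '' (V'Z : Set (Fin 3 → ℤ√(2 : ℕ))) := by
  rw [V', V_eq_image, Vtop_eq_image, Vnew_eq_image, ← Set.image_sdiff toEuclidean_injective,
    ← Set.image_union, V'Z, Finset.coe_union, Finset.coe_sdiff]

theorem two_sq_le_sqDist_of_mem_V'Z : ∀ p ∈ V'Z, ∀ q ∈ V'Z, p ≠ q → 2 ^ 2 ≤ sqDist p q := by
  decide

theorem card_filter_sqDist_eq_two_sq_V'Z :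
    ∀ q ∈ V'Z, #(V'Z.filter fun p => sqDist p q = 2 ^ 2) = 4 := by
  decide

/-- In the pseudo-rhombicuboctahedron every vertex has exactly 4 neighbors: the minimum
distance between distinct points of `V'` is 2, and every `v ∈ V'` has exactly 4 points
of `V'` at distance 2. -/
theorem pseudoRhombicuboctahedron_four_neighbors :
    (∀ u ∈ V', ∀ w ∈ V', u ≠ w → 2 ≤ dist u w) ∧
    (∃ u ∈ V', ∃ w ∈ V', u ≠ w ∧ dist u w = 2) ∧
    (∀ v ∈ V', {u | u ∈ V' ∧ dist u v = 2}.ncard = 4) := by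
  simp only [V'_eq_image, Set.forall_mem_image, Set.exists_mem_image, Finset.mem_coe]
  refine ⟨fun p hp q hq hpq => ?_, ?_, fun q hq => ?_⟩
  · have h := two_sq_le_sqDist_of_mem_V'Z p hp q hq (ne_of_apply_ne _ hpq)
    exact_mod_cast natCast_le_dist_toEuclidean (n := 2) (by simpa using h)
  · refine ⟨![1 + sqrtd, 1, 1], by decide, ![1 + sqrtd, 1, -1], by decide,
      toEuclidean_injective.ne (by decide), ?_⟩
    exact_mod_cast dist_toEuclidean_eq_natCast_iff.2 (by decide)
  · have h := ncard_sphere_inter_image_toEuclidean V'Z q 2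
    simp only [Nat.cast_ofNat] at h
    exact h.trans (card_filter_sqDist_eq_two_sq_V'Z q hq)
end
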